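/- arXiv:2411.12461 — 2 statements merged into one kernel-verified Lean document; each statement's English description precedes it below -/
import Mathlib

section
/- Let I be a finite index set, P = (p_{ij})_{i,j∈I} a row-stochastic matrix (each p_{ij} ≥ 0 and ∑_j p_{ij} = 1 for each i), and (p_i)_{i∈I} a stationary distribution (p_j = ∑_i p_i p_{ij}) with all p_i > 0. Let 1 < p < ∞, let X be an L^p space over a measure space, and let α_j : X → X (j ∈ I) be positive linear contractions, i.e. ‖α_j(x)‖_p ≤ ‖x‖_p. Define T on the direct sum ⊕_{i∈I} X with norm ‖(x_j)‖ = (∑_i p_i ‖x_i‖_p^p)^{1/p} by T(x_i)_j = ∑_{i∈I} (p_i p_{ij}/p_j) α_j(x_i). Then T is a contraction: ‖T(x)‖ ≤ ‖x‖ for all x. -/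
open MeasureTheory
open scoped BigOperators

/-- Let `P` be a row-stochastic matrix over a finite index set `I` with a
strictly positive stationary distribution `p`, and let `α_j` be positive linear
contractions on an `L^p` space (`1 < p < ∞`).  Then the operator
`T(x)_j = ∑ᵢ (pᵢ p_{ij}/p_j) α_j(xᵢ)` is a contraction on the direct sum
`⊕ᵢ L^p` with weighted norm `‖(x_j)‖ = (∑ᵢ pᵢ ‖xᵢ‖_p^p)^{1/p}`. -/
theorem weighted_directSum_operator_contraction
    {ι : Type*} [Fintype ι]
    {Ω : Type*} [MeasurableSpace Ω] (ν : Measure Ω)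
    (pr : ℝ) (hpr : 1 < pr)
    (P : ι → ι → ℝ) (p : ι → ℝ)
    (hPnonneg : ∀ i j, 0 ≤ P i j)
    (hProw : ∀ i, ∑ j, P i j = 1)
    (hstat : ∀ j, p j = ∑ i, p i * P i j)
    (hppos : ∀ i, 0 < p i)
    (α : ι → (Lp ℝ (ENNReal.ofReal pr) ν →ₗ[ℝ] Lp ℝ (ENNReal.ofReal pr) ν))
    (hcontr : ∀ j x, ‖α j x‖ ≤ ‖x‖)
    (hpos : ∀ j (x : Lp ℝ (ENNReal.ofReal pr) ν), 0 ≤ x → 0 ≤ α j x)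
    (x : ι → Lp ℝ (ENNReal.ofReal pr) ν) :
    (∑ j, p j * ‖∑ i, (p i * P i j / p j) • α j (x i)‖ ^ pr) ^ (1/pr)
      ≤ (∑ i, p i * ‖x i‖ ^ pr) ^ (1/pr) := by
  haveI : Fact (1 ≤ ENNReal.ofReal pr) := ⟨ENNReal.one_le_ofReal.mpr hpr.le⟩
  set c : ι → ι → ℝ := fun i j => p i * P i j / p j with hc
  have hcnonneg : ∀ i j, 0 ≤ c i j := fun i j =>
    div_nonneg (mul_nonneg (hppos i).le (hPnonneg i j)) (hppos j).le
  have hcsum : ∀ j, ∑ i, c i j = 1 := by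
    intro j
    rw [← Finset.sum_div, ← hstat j, div_self (hppos j).ne']
  -- pointwise bound
  have key : ∀ j, ‖∑ i, c i j • α j (x i)‖ ^ pr ≤ ∑ i, c i j * ‖x i‖ ^ pr := by
    intro j
    have h1 : ‖∑ i, c i j • α j (x i)‖ ≤ ∑ i, c i j * ‖x i‖ := by
      refine (norm_sum_le Finset.univ (fun i => c i j • α j (x i))).trans (Finset.sum_le_sum fun i _ => ?_)
      rw [norm_smul, Real.norm_eq_abs, abs_of_nonneg (hcnonneg i j)]
      exact mul_le_mul_of_nonneg_left (hcontr j (x i)) (hcnonneg i j)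
    have h2 : (∑ i, c i j * ‖x i‖) ^ pr ≤ ∑ i, c i j * ‖x i‖ ^ pr :=
      Real.rpow_arith_mean_le_arith_mean_rpow Finset.univ (fun i => c i j)
        (fun i => ‖x i‖) (fun i _ => hcnonneg i j) (hcsum j)
        (fun i _ => norm_nonneg (x i)) hpr.le
    refine le_trans ?_ h2
    exact Real.rpow_le_rpow (norm_nonneg _) h1 (by linarith)
  have hsum : ∑ j, p j * ‖∑ i, c i j • α j (x i)‖ ^ pr ≤ ∑ i, p i * ‖x i‖ ^ pr := by
    calc ∑ j, p j * ‖∑ i, c i j • α j (x i)‖ ^ pr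
        ≤ ∑ j, p j * ∑ i, c i j * ‖x i‖ ^ pr := by
          exact Finset.sum_le_sum fun j _ =>
            mul_le_mul_of_nonneg_left (key j) (hppos j).le
      _ = ∑ j, ∑ i, p i * P i j * ‖x i‖ ^ pr := by
          refine Finset.sum_congr rfl fun j _ => ?_
          rw [Finset.mul_sum]
          refine Finset.sum_congr rfl fun i _ => ?_
          rw [hc]
          field_simp [(hppos j).ne']
      _ = ∑ i, p i * ‖x i‖ ^ pr := by
          rw [Finset.sum_comm]
          refine Finset.sum_congr rfl fun i _ => ?_
          rw [← Finset.sum_mul, ← Finset.mul_sum, hProw i, mul_one]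
  refine Real.rpow_le_rpow (Finset.sum_nonneg fun j _ => mul_nonneg (hppos j).le
    (Real.rpow_nonneg (norm_nonneg (∑ i, c i j • α j (x i))) pr)) hsum (by positivity)
end

section
/- With the setting of the previous recursion (finite set I, stochastic matrix P with positive stationary distribution (p_i), operators α_i on X, spherical sums S_n^{(j)} = ∑_{|ω|=n, ω_n=j} μ(ω) α_ω), define T on ⊕_{i∈I} X by T(x_i)_j = ∑_{i∈I} (p_i p_{ij}/p_j) α_j(x_i). Then for every x ∈ X and n ≥ 1, the n-th power of T applied to the diagonal vector (x,…,x) equals (S_n^{(j)}(x)/p_j)_{j∈I}. -/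
open scoped BigOperators

/-- The Markov weight `μ(ω) = p_{ω₁} p_{ω₁ω₂} ⋯ p_{ω_{n-1}ω_n}` of a word of length `n+1`. -/
def wordWeight {ι : Type*} (p : ι → ℝ) (P : ι → ι → ℝ) (n : ℕ) (ω : Fin (n+1) → ι) : ℝ :=
  p (ω 0) * ∏ k : Fin n, P (ω k.castSucc) (ω k.succ)

/-- `α_ω = α_{ω_n} ∘ ⋯ ∘ α_{ω₁}` for a word `ω` of length `n+1`. -/
def wordMap {ι : Type*} {X : Type*} [AddCommGroup X] [Module ℝ X]
    (α : ι → Module.End ℝ X) : (n : ℕ) → (Fin (n+1) → ι) → Module.End ℝ X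
  | 0, ω => α (ω 0)
  | (n+1), ω => α (ω (Fin.last (n+1))) * wordMap α n (fun k => ω k.castSucc)

/-- The spherical sum `S_{n+1}^{(j)} = ∑_{|ω|=n+1, last letter j} μ(ω) α_ω`. -/
noncomputable def sph {ι : Type*} [Fintype ι] [DecidableEq ι]
    {X : Type*} [AddCommGroup X] [Module ℝ X]
    (p : ι → ℝ) (P : ι → ι → ℝ) (α : ι → Module.End ℝ X) (n : ℕ) (j : ι) :
    Module.End ℝ X :=
  ∑ ω : Fin (n+1) → ι,
    if ω (Fin.last n) = j then wordWeight p P n ω • wordMap α n ω else 0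

/-- The direct-sum Markov operator `T(x)_j = ∑ᵢ (pᵢ p_{ij}/p_j) α_j(xᵢ)` on `⊕ᵢ X`. -/
noncomputable def dirSumOp {ι : Type*} [Fintype ι] {X : Type*} [AddCommGroup X] [Module ℝ X]
    (p : ι → ℝ) (P : ι → ι → ℝ) (α : ι → Module.End ℝ X) :
    (ι → X) → (ι → X) :=
  fun x j => ∑ i, (p i * P i j / p j) • α j (x i)

lemma wordWeight_snoc {ι : Type*} (p : ι → ℝ) (P : ι → ι → ℝ) (n : ℕ)
    (ω : Fin (n+1) → ι) (i : ι) :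
    wordWeight p P (n+1) (Fin.snoc ω i) = wordWeight p P n ω * P (ω (Fin.last n)) i := by
  unfold wordWeight
  rw [Fin.prod_univ_castSucc]
  have h0 : (Fin.snoc ω i : Fin (n+2) → ι) 0 = ω 0 := by
    have : (0 : Fin (n+2)) = Fin.castSucc 0 := rfl
    rw [this, Fin.snoc_castSucc]
  rw [h0]
  simp only [Fin.succ_castSucc, Fin.snoc_castSucc, Fin.succ_last, Fin.snoc_last]
  ring

lemma wordMap_snoc {ι : Type*} {X : Type*} [AddCommGroup X] [Module ℝ X]
    (α : ι → Module.End ℝ X) (n : ℕ) (ω : Fin (n+1) → ι) (i : ι) :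
    wordMap α (n+1) (Fin.snoc ω i) = α i * wordMap α n ω := by
  show α ((Fin.snoc ω i : Fin (n+2) → ι) (Fin.last (n+1))) *
      wordMap α n (fun k => (Fin.snoc ω i : Fin (n+2) → ι) k.castSucc) = _
  congr 1
  · rw [Fin.snoc_last]
  · congr 1
    ext k
    rw [Fin.snoc_castSucc]

lemma sph_succ {ι : Type*} [Fintype ι] [DecidableEq ι]
    {X : Type*} [AddCommGroup X] [Module ℝ X]
    (p : ι → ℝ) (P : ι → ι → ℝ) (α : ι → Module.End ℝ X) (n : ℕ) (j : ι) :
    sph p P α (n+1) j = ∑ i, (P i j) • (α j * sph p P α n i) := by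
  unfold sph
  have h : (∑ ω : Fin (n+1+1) → ι,
        if ω (Fin.last (n+1)) = j then wordWeight p P (n+1) ω • wordMap α (n+1) ω else 0)
      = ∑ q : ι × (Fin (n+1) → ι),
        if q.1 = j then (wordWeight p P n q.2 * P (q.2 (Fin.last n)) q.1) •
          (α q.1 * wordMap α n q.2) else 0 := by
    refine (Fintype.sum_equiv (Fin.snocEquiv (fun _ : Fin (n+2) => ι)) _ _ ?_).symm
    rintro ⟨i, ω⟩
    simp only [Fin.snocEquiv, Equiv.coe_fn_mk, Fin.snoc_last, wordWeight_snoc, wordMap_snoc]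
  rw [h, Fintype.sum_prod_type, Finset.sum_comm]
  simp only [Finset.mul_sum, Finset.smul_sum]
  conv_rhs => rw [Finset.sum_comm]
  refine Finset.sum_congr rfl fun ω _ => ?_
  rw [Finset.sum_ite_eq' Finset.univ j
    (fun i => (wordWeight p P n ω * P (ω (Fin.last n)) i) • (α i * wordMap α n ω))]
  simp only [mul_ite, mul_zero, smul_ite, smul_zero]
  rw [Finset.sum_ite_eq Finset.univ (ω (Fin.last n))
    (fun i => P i j • (α j * wordWeight p P n ω • wordMap α n ω))]
  simp [mul_smul_comm, smul_smul, mul_comm]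

/-- For every `x ∈ X` and `n ≥ 1`, the `n`-th power of `T` applied to the
diagonal vector `(x,…,x)` equals `(S_n^{(j)}(x)/p_j)_{j∈I}`  (here `sph n` is `S_{n+1}`,
so `T^[n+1]` corresponds to `S_{n+1}`). -/
theorem dirSumOp_iterate_diagonal
    {ι : Type*} [Fintype ι] [DecidableEq ι]
    {X : Type*} [AddCommGroup X] [Module ℝ X]
    (p : ι → ℝ) (P : ι → ι → ℝ)
    (hPnonneg : ∀ i j, 0 ≤ P i j)
    (hProw : ∀ i, ∑ j, P i j = 1)
    (hstat : ∀ j, p j = ∑ i, p i * P i j)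
    (hppos : ∀ i, 0 < p i)
    (α : ι → Module.End ℝ X) (x : X) (n : ℕ) :
    (dirSumOp p P α)^[n+1] (fun _ => x) =
      fun j => (p j)⁻¹ • (sph p P α n j x) := by
  induction n with
  | zero =>
    funext j
    show dirSumOp p P α (fun _ => x) j = _
    unfold dirSumOp sph
    rw [← Finset.sum_smul]
    have : (∑ i, p i * P i j / p j) = 1 := by
      rw [← Finset.sum_div, ← hstat j, div_self (hppos j).ne']
    rw [this, one_smul]
    rw [Fintype.sum_eq_single (fun _ : Fin 1 => j) (by
      intro ω hω
      have : ω 0 ≠ j := fun h => hω (funext fun k => by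
        have : k = (0 : Fin 1) := Subsingleton.elim _ _
        rw [this, h])
      simp [this])]
    simp [wordWeight, wordMap, (hppos j).ne']
  | succ n ih =>
    rw [Function.iterate_succ_apply', ih]
    funext j
    show ∑ i, (p i * P i j / p j) • α j ((p i)⁻¹ • sph p P α n i x) = _
    rw [sph_succ]
    simp only [LinearMap.sum_apply, LinearMap.smul_apply, Finset.smul_sum, Module.End.mul_apply]
    congr 1
    ext i
    rw [map_smul, smul_smul, smul_smul]
    congr 1
    have hi := (hppos i).ne'
    have hj := (hppos j).ne'
    field_simp
end
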